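/- arXiv:2105.12628 — 7 statements merged into one kernel-verified Lean document; each statement's English description precedes it below -/
import Mathlib

section
/- Let P_i and P_j be joint distributions on X₁ × X₂ × {0,1} with P_i(x₁,x₂) > 0 and P_j(x₁,x₂) > 0 for all (x₁,x₂), and suppose 0 < α_j^i < 1. Fix (x₁,x₂) and assume Σ_{y'} P_i(y'|x₁,x₂)·P_j(y'|x₁,x₂) > 0 and Σ_{y'} P_i(1−y'|x₁,x₂)·P_j(y'|x₁,x₂) > 0. Then the label conditionals of the partition distributions satisfy P_j^{i✓}(y|x₁,x₂) = P_i(y|x₁,x₂)·P_j(y|x₁,x₂) / Σ_{y'} P_i(y'|x₁,x₂)·P_j(y'|x₁,x₂) and P_j^{i×}(y|x₁,x₂) = P_i(1−y|x₁,x₂)·P_j(y|x₁,x₂) / Σ_{y'} P_i(1−y'|x₁,x₂)·P_j(y'|x₁,x₂) for each y ∈ {0,1}. -/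
open Finset

/-- A (joint) distribution on a finite type: nonnegative and summing to 1. -/
def IsDist {S : Type*} [Fintype S] (P : S → ℝ) : Prop :=
  (∀ s, 0 ≤ P s) ∧ ∑ s, P s = 1

/-- The (X₁, X₂)-marginal `P(x₁, x₂) = P(x₁,x₂,0) + P(x₁,x₂,1)`. -/
def margXY {X₁ X₂ : Type*} (P : X₁ × X₂ × Fin 2 → ℝ) (x₁ : X₁) (x₂ : X₂) : ℝ :=
  P (x₁, x₂, 0) + P (x₁, x₂, 1)

/-- The conditional `P(y | x₁, x₂) = P(x₁,x₂,y) / P(x₁,x₂)`. -/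
noncomputable def condY {X₁ X₂ : Type*} (P : X₁ × X₂ × Fin 2 → ℝ)
    (y : Fin 2) (x₁ : X₁) (x₂ : X₂) : ℝ :=
  P (x₁, x₂, y) / margXY P x₁ x₂

/-- `α_j^i = Σ_{x₁,x₂,y} P_j(x₁,x₂,y) · P_i(y | x₁,x₂)`,
the probability that the classifier derived from `Pi` is correct on `Pj`. -/
noncomputable def alphaP {X₁ X₂ : Type*} [Fintype X₁] [Fintype X₂]
    (Pi' Pj' : X₁ × X₂ × Fin 2 → ℝ) : ℝ :=
  ∑ x₁ : X₁, ∑ x₂ : X₂, ∑ y : Fin 2, Pj' (x₁, x₂, y) * condY Pi' y x₁ x₂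

/-- The correct-prediction partition `P_j^{i✓}(x₁,x₂,y) = P_j(x₁,x₂,y)·P_i(y|x₁,x₂)/α_j^i`. -/
noncomputable def partC {X₁ X₂ : Type*} [Fintype X₁] [Fintype X₂]
    (Pi' Pj' : X₁ × X₂ × Fin 2 → ℝ) (z : X₁ × X₂ × Fin 2) : ℝ :=
  Pj' z * condY Pi' z.2.2 z.1 z.2.1 / alphaP Pi' Pj'

/-- The wrong-prediction partition `P_j^{i×}(x₁,x₂,y) = P_j(x₁,x₂,y)·P_i(1−y|x₁,x₂)/(1−α_j^i)`. -/
noncomputable def partW {X₁ X₂ : Type*} [Fintype X₁] [Fintype X₂]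
    (Pi' Pj' : X₁ × X₂ × Fin 2 → ℝ) (z : X₁ × X₂ × Fin 2) : ℝ :=
  Pj' z * condY Pi' (1 - z.2.2) z.1 z.2.1 / (1 - alphaP Pi' Pj')

/-- `Cov(X₂, Y; P)` where the value of `x₂` is `v x₂` and `y ∈ {0,1} ⊆ ℝ`. -/
noncomputable def covXY {X₁ X₂ : Type*} [Fintype X₁] [Fintype X₂] (v : X₂ → ℝ)
    (P : X₁ × X₂ × Fin 2 → ℝ) : ℝ :=
  (∑ z : X₁ × X₂ × Fin 2, v z.2.1 * ((z.2.2 : ℕ) : ℝ) * P z)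
    - (∑ z : X₁ × X₂ × Fin 2, v z.2.1 * P z)
      * (∑ z : X₁ × X₂ × Fin 2, ((z.2.2 : ℕ) : ℝ) * P z)

/-- The Y-marginal of `P` is uniform. -/
def uniformY {X₁ X₂ : Type*} [Fintype X₁] [Fintype X₂] (P : X₁ × X₂ × Fin 2 → ℝ) : Prop :=
  ∀ y : Fin 2, ∑ x₁ : X₁, ∑ x₂ : X₂, P (x₁, x₂, y) = 1 / 2

/-- Under a uniform Y-marginal, `P(x₂ | y) = 2 · Σ_{x₁} P(x₁,x₂,y)`. -/
noncomputable def condX2Y {X₁ X₂ : Type*} [Fintype X₁] (P : X₁ × X₂ × Fin 2 → ℝ)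
    (x₂ : X₂) (y : Fin 2) : ℝ :=
  2 * ∑ x₁ : X₁, P (x₁, x₂, y)

/-- `X₂` is independent of `X₁` given `Y` under `P`. -/
def condIndep {X₁ X₂ : Type*} [Fintype X₁] [Fintype X₂] (P : X₁ × X₂ × Fin 2 → ℝ) : Prop :=
  ∀ (x₁ : X₁) (x₂ : X₂) (y : Fin 2),
    P (x₁, x₂, y) * (∑ x₁' : X₁, ∑ x₂' : X₂, P (x₁', x₂', y))
      = (∑ x₂' : X₂, P (x₁, x₂', y)) * (∑ x₁' : X₁, P (x₁', x₂, y))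


/- Both partitions reweight `P_j` by a factor depending only on `(x₁, x₂, y)` and then normalise by a
global constant. The constant cancels in the conditional, and writing `P_j(x₁,x₂,y)` as
`P_j(y|x₁,x₂)·P_j(x₁,x₂)` the marginal cancels as well, leaving the reweighted conditional of `P_j`. -/

section LabelConditional

variable {X₁ X₂ : Type*} (P : X₁ × X₂ × Fin 2 → ℝ) (x₁ : X₁) (x₂ : X₂)

theorem condY_div_const {c : ℝ} (hc : c ≠ 0) (y : Fin 2) :
    condY (fun z => P z / c) y x₁ x₂ = condY P y x₁ x₂ := by
  simp only [condY, margXY]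
  rw [← add_div, div_div_div_cancel_right₀ hc]

theorem condY_mul_weight (w : Fin 2 → X₁ → X₂ → ℝ) (hP : margXY P x₁ x₂ ≠ 0) (y : Fin 2) :
    condY (fun z => P z * w z.2.2 z.1 z.2.1) y x₁ x₂
      = w y x₁ x₂ * condY P y x₁ x₂ / ∑ y' : Fin 2, w y' x₁ x₂ * condY P y' x₁ x₂ := by
  simp only [condY, margXY, Fin.sum_univ_two] at hP ⊢
  field_simp

end LabelConditional

theorem stmt2_general {X₁ X₂ : Type*} [Fintype X₁] [Fintype X₂]
    (Pi' Pj' : X₁ × X₂ × Fin 2 → ℝ)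
    (hposj : ∀ x₁ x₂, 0 < margXY Pj' x₁ x₂)
    (hα0 : 0 < alphaP Pi' Pj') (hα1 : alphaP Pi' Pj' < 1)
    (x₁ : X₁) (x₂ : X₂) :
    ∀ y : Fin 2,
      condY (partC Pi' Pj') y x₁ x₂
        = condY Pi' y x₁ x₂ * condY Pj' y x₁ x₂
            / ∑ y' : Fin 2, condY Pi' y' x₁ x₂ * condY Pj' y' x₁ x₂ ∧
      condY (partW Pi' Pj') y x₁ x₂
        = condY Pi' (1 - y) x₁ x₂ * condY Pj' y x₁ x₂
            / ∑ y' : Fin 2, condY Pi' (1 - y') x₁ x₂ * condY Pj' y' x₁ x₂ := by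
  intro y
  have hPj := (hposj x₁ x₂).ne'
  have hα1' : 1 - alphaP Pi' Pj' ≠ 0 := sub_ne_zero.mpr hα1.ne'
  constructor
  · exact (condY_div_const _ x₁ x₂ hα0.ne' y).trans
      (condY_mul_weight Pj' x₁ x₂ (condY Pi') hPj y)
  · exact (condY_div_const _ x₁ x₂ hα1' y).trans
      (condY_mul_weight Pj' x₁ x₂ (fun y' => condY Pi' (1 - y')) hPj y)

/-- label conditionals of the partition distributions. -/
theorem stmt2 {X₁ X₂ : Type*} [Fintype X₁] [Fintype X₂] [Nonempty X₁] [Nonempty X₂]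
    (Pi' Pj' : X₁ × X₂ × Fin 2 → ℝ) (hPi' : IsDist Pi') (hPj' : IsDist Pj')
    (hposi : ∀ x₁ x₂, 0 < margXY Pi' x₁ x₂) (hposj : ∀ x₁ x₂, 0 < margXY Pj' x₁ x₂)
    (hα0 : 0 < alphaP Pi' Pj') (hα1 : alphaP Pi' Pj' < 1)
    (x₁ : X₁) (x₂ : X₂)
    (hden1 : 0 < ∑ y' : Fin 2, condY Pi' y' x₁ x₂ * condY Pj' y' x₁ x₂)
    (hden2 : 0 < ∑ y' : Fin 2, condY Pi' (1 - y') x₁ x₂ * condY Pj' y' x₁ x₂) :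
    ∀ y : Fin 2,
      condY (partC Pi' Pj') y x₁ x₂
        = condY Pi' y x₁ x₂ * condY Pj' y x₁ x₂
            / ∑ y' : Fin 2, condY Pi' y' x₁ x₂ * condY Pj' y' x₁ x₂ ∧
      condY (partW Pi' Pj') y x₁ x₂
        = condY Pi' (1 - y) x₁ x₂ * condY Pj' y x₁ x₂
            / ∑ y' : Fin 2, condY Pi' (1 - y') x₁ x₂ * condY Pj' y' x₁ x₂ :=
  stmt2_general Pi' Pj' hposj hα0 hα1 x₁ x₂
end

section
/- (Theorem 1) Take X₂ = {0,1} ⊆ ℝ. Let P_i and P_j be joint distributions on X₁ × {0,1} × {0,1} such that: P_i(x₁,x₂) > 0 and P_j(x₁,x₂) > 0 for all (x₁,x₂); 0 < α_j^i < 1 and 0 < α_i^j < 1; the Y-marginals of P_i, P_j, P_j^{i×} and P_i^{j×} are all uniform; X₂ is independent of X₁ given Y under both P_i and P_j; the stable feature has the same joint law with the label in both environments, i.e. Σ_{x₂} P_i(x₁,x₂,y) = Σ_{x₂} P_j(x₁,x₂,y) for all (x₁,y); and Σ_y P_i(x₂|y) = Σ_y P_j(x₂|y) for every x₂. If Cov(X₂,Y;P_i)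 > Cov(X₂,Y;P_j), then Cov(X₂,Y;P_j^{i×}) < 0 and Cov(X₂,Y;P_i^{j×}) > 0. -/
open Finset

lemma cov_formula {X₁ : Type*} [Fintype X₁] (P : X₁ × Fin 2 × Fin 2 → ℝ)
    (hu : uniformY P) :
    covXY (fun x₂ : Fin 2 => ((x₂ : ℕ) : ℝ)) P
      = ((∑ x₁ : X₁, P (x₁, 1, 1)) - (∑ x₁ : X₁, P (x₁, 1, 0))) / 2 := by
  have h1 : (∑ x₁ : X₁, P (x₁, 0, 1)) + (∑ x₁ : X₁, P (x₁, 1, 1)) = 1 / 2 := by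
    rw [← Finset.sum_add_distrib]
    have := hu 1
    simp only [Fin.sum_univ_two] at this
    exact this
  unfold covXY
  simp only [Fintype.sum_prod_type, Fin.sum_univ_two, Fin.val_zero, Fin.val_one,
    Nat.cast_zero, Nat.cast_one, zero_mul, one_mul, mul_zero, mul_one, zero_add, add_zero,
    Finset.sum_add_distrib]
  rw [h1]
  ring
/-- Theorem 1: with `X₂ = {0,1} ⊆ ℝ`, a strictly larger unstable
correlation in `E_i` forces a negative correlation on the mistakes `P_j^{i×}`
and a positive one on `P_i^{j×}`. -/
theorem stmt6 {X₁ : Type*} [Fintype X₁] [Nonempty X₁]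
    (Pi' Pj' : X₁ × Fin 2 × Fin 2 → ℝ) (hPi' : IsDist Pi') (hPj' : IsDist Pj')
    (hposi : ∀ x₁ x₂, 0 < margXY Pi' x₁ x₂) (hposj : ∀ x₁ x₂, 0 < margXY Pj' x₁ x₂)
    (hαji0 : 0 < alphaP Pi' Pj') (hαji1 : alphaP Pi' Pj' < 1)
    (hαij0 : 0 < alphaP Pj' Pi') (hαij1 : alphaP Pj' Pi' < 1)
    (hui : uniformY Pi') (huj : uniformY Pj')
    (huwji : uniformY (partW Pi' Pj')) (huwij : uniformY (partW Pj' Pi'))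
    (hcii : condIndep Pi') (hcij : condIndep Pj')
    (hstable : ∀ (x₁ : X₁) (y : Fin 2),
      ∑ x₂ : Fin 2, Pi' (x₁, x₂, y) = ∑ x₂ : Fin 2, Pj' (x₁, x₂, y))
    (hmargx2 : ∀ x₂ : Fin 2,
      ∑ y : Fin 2, condX2Y Pi' x₂ y = ∑ y : Fin 2, condX2Y Pj' x₂ y)
    (hcov : covXY (fun x₂ : Fin 2 => ((x₂ : ℕ) : ℝ)) Pi'
              > covXY (fun x₂ : Fin 2 => ((x₂ : ℕ) : ℝ)) Pj') :
    covXY (fun x₂ : Fin 2 => ((x₂ : ℕ) : ℝ)) (partW Pi' Pj') < 0 ∧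
    0 < covXY (fun x₂ : Fin 2 => ((x₂ : ℕ) : ℝ)) (partW Pj' Pi') := by
  classical
  set m : X₁ → Fin 2 → ℝ := fun x₁ y => ∑ x₂ : Fin 2, Pi' (x₁, x₂, y) with hm
  set ci : Fin 2 → Fin 2 → ℝ := fun x₂ y => ∑ x₁ : X₁, Pi' (x₁, x₂, y) with hci
  set cj : Fin 2 → Fin 2 → ℝ := fun x₂ y => ∑ x₁ : X₁, Pj' (x₁, x₂, y) with hcj
  -- factorizations
  have hfi : ∀ x₁ x₂ y, Pi' (x₁, x₂, y) = 2 * m x₁ y * ci x₂ y := by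
    intro x₁ x₂ y
    have h := hcii x₁ x₂ y
    rw [hui y] at h
    simp only [hm, hci]
    linarith
  have hmj : ∀ x₁ y, m x₁ y = ∑ x₂ : Fin 2, Pj' (x₁, x₂, y) := by
    intro x₁ y; simp only [hm]; exact hstable x₁ y
  have hfj : ∀ x₁ x₂ y, Pj' (x₁, x₂, y) = 2 * m x₁ y * cj x₂ y := by
    intro x₁ x₂ y
    have h := hcij x₁ x₂ y
    rw [huj y] at h
    rw [hmj x₁ y]
    simp only [hcj]
    linarith
  -- nonnegativity
  have hm0 : ∀ x₁ y, 0 ≤ m x₁ y := fun x₁ y =>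
    Finset.sum_nonneg fun x₂ _ => hPi'.1 (x₁, x₂, y)
  have hci0 : ∀ x₂ y, 0 ≤ ci x₂ y := fun x₂ y =>
    Finset.sum_nonneg fun x₁ _ => hPi'.1 (x₁, x₂, y)
  have hcj0 : ∀ x₂ y, 0 ≤ cj x₂ y := fun x₂ y =>
    Finset.sum_nonneg fun x₁ _ => hPj'.1 (x₁, x₂, y)
  -- marginal x2 condition
  have hAB : ci 1 0 + ci 1 1 = cj 1 0 + cj 1 1 := by
    have := hmargx2 1
    simp only [condX2Y, Fin.sum_univ_two, hci, hcj] at this ⊢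
    linarith
  -- covariances
  have hcovi := cov_formula Pi' hui
  have hcovj := cov_formula Pj' huj
  rw [hcovi, hcovj] at hcov
  have hcov' : ci 1 1 - ci 1 0 > cj 1 1 - cj 1 0 := by
    simp only [hci, hcj]; linarith
  -- key sign
  have hK : cj 1 1 * ci 1 0 - cj 1 0 * ci 1 1 < 0 := by
    nlinarith [hci0 1 0, hci0 1 1, hcj0 1 0, hcj0 1 1]
  -- existence of a good x₁
  have hex : ∃ x₁ : X₁, 0 < m x₁ 0 ∧ 0 < m x₁ 1 := by
    by_contra hcon
    push_neg at hcon
    have hz : ∀ x₁ : X₁, m x₁ 0 = 0 ∨ m x₁ 1 = 0 := by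
      intro x₁
      rcases lt_or_eq_of_le (hm0 x₁ 0) with h | h
      · right; exact le_antisymm (hcon x₁ h) (hm0 x₁ 1)
      · left; exact h.symm
    have halpha : alphaP Pi' Pj' = 1 := by
      have hone : ∑ x₁ : X₁, ∑ x₂ : Fin 2, ∑ y : Fin 2, Pj' (x₁, x₂, y) = 1 := by
        simpa [Fintype.sum_prod_type] using hPj'.2
      rw [alphaP, ← hone]
      refine Finset.sum_congr rfl fun x₁ _ => Finset.sum_congr rfl fun x₂ _ => ?_
      rcases hz x₁ with h | h
      · have hpi0 : Pi' (x₁, x₂, 0) = 0 := by rw [hfi, h]; ring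
        have hpj0 : Pj' (x₁, x₂, 0) = 0 := by rw [hfj, h]; ring
        have hmg : margXY Pi' x₁ x₂ = Pi' (x₁, x₂, 1) := by
          unfold margXY; rw [hpi0]; ring
        have hne : Pi' (x₁, x₂, 1) ≠ 0 := by
          have := hposi x₁ x₂; rw [hmg] at this; exact ne_of_gt this
        simp [Fin.sum_univ_two, condY, hpj0, hmg, div_self hne]
      · have hpi1 : Pi' (x₁, x₂, 1) = 0 := by rw [hfi, h]; ring
        have hpj1 : Pj' (x₁, x₂, 1) = 0 := by rw [hfj, h]; ring
        have hmg : margXY Pi' x₁ x₂ = Pi' (x₁, x₂, 0) := by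
          unfold margXY; rw [hpi1]; ring
        have hne : Pi' (x₁, x₂, 0) ≠ 0 := by
          have := hposi x₁ x₂; rw [hmg] at this; exact ne_of_gt this
        simp [Fin.sum_univ_two, condY, hpj1, hmg, div_self hne]
    linarith
  have h1α : 0 < 1 - alphaP Pi' Pj' := by linarith
  have h1α' : 0 < 1 - alphaP Pj' Pi' := by linarith
  -- covariance formulas for the wrong partitions
  have hcw : covXY (fun x₂ : Fin 2 => ((x₂ : ℕ) : ℝ)) (partW Pi' Pj')
      = ∑ x₁ : X₁, 2 * m x₁ 1 * m x₁ 0 * (cj 1 1 * ci 1 0 - cj 1 0 * ci 1 1)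
          / (margXY Pi' x₁ 1 * (1 - alphaP Pi' Pj')) := by
    rw [cov_formula _ huwji, ← Finset.sum_sub_distrib, Finset.sum_div]
    refine Finset.sum_congr rfl fun x₁ _ => ?_
    have hD := hposi x₁ 1
    simp only [partW, condY, show ((1:Fin 2) - 1) = 0 by decide, show ((1:Fin 2) - 0) = 1 by decide]
    rw [hfi x₁ 1 0, hfi x₁ 1 1, hfj x₁ 1 0, hfj x₁ 1 1]
    field_simp
  have hcw' : covXY (fun x₂ : Fin 2 => ((x₂ : ℕ) : ℝ)) (partW Pj' Pi')
      = ∑ x₁ : X₁, 2 * m x₁ 1 * m x₁ 0 * (ci 1 1 * cj 1 0 - ci 1 0 * cj 1 1)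
          / (margXY Pj' x₁ 1 * (1 - alphaP Pj' Pi')) := by
    rw [cov_formula _ huwij, ← Finset.sum_sub_distrib, Finset.sum_div]
    refine Finset.sum_congr rfl fun x₁ _ => ?_
    have hD := hposj x₁ 1
    simp only [partW, condY, show ((1:Fin 2) - 1) = 0 by decide, show ((1:Fin 2) - 0) = 1 by decide]
    rw [hfi x₁ 1 0, hfi x₁ 1 1, hfj x₁ 1 0, hfj x₁ 1 1]
    field_simp
  obtain ⟨x₀, hx00, hx01⟩ := hex
  constructor
  · rw [hcw]
    have : (∑ x₁ : X₁, 2 * m x₁ 1 * m x₁ 0 * (cj 1 1 * ci 1 0 - cj 1 0 * ci 1 1)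
          / (margXY Pi' x₁ 1 * (1 - alphaP Pi' Pj'))) < ∑ _x₁ : X₁, (0:ℝ) := by
      refine Finset.sum_lt_sum (fun x₁ _ => ?_) ⟨x₀, Finset.mem_univ _, ?_⟩
      · apply div_nonpos_of_nonpos_of_nonneg
        · nlinarith [hm0 x₁ 0, hm0 x₁ 1, mul_nonneg (hm0 x₁ 1) (hm0 x₁ 0)]
        · exact le_of_lt (mul_pos (hposi x₁ 1) h1α)
      · apply div_neg_of_neg_of_pos
        · nlinarith [mul_pos hx01 hx00]
        · exact mul_pos (hposi x₀ 1) h1α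
    simpa using this
  · rw [hcw']
    have : (∑ _x₁ : X₁, (0:ℝ)) < ∑ x₁ : X₁, 2 * m x₁ 1 * m x₁ 0 * (ci 1 1 * cj 1 0 - ci 1 0 * cj 1 1)
          / (margXY Pj' x₁ 1 * (1 - alphaP Pj' Pi')) := by
      refine Finset.sum_lt_sum (fun x₁ _ => ?_) ⟨x₀, Finset.mem_univ _, ?_⟩
      · apply div_nonneg
        · nlinarith [hm0 x₁ 0, hm0 x₁ 1, mul_nonneg (hm0 x₁ 1) (hm0 x₁ 0)]
        · exact le_of_lt (mul_pos (hposj x₁ 1) h1α')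
      · apply div_pos
        · nlinarith [mul_pos hx01 hx00]
        · exact mul_pos (hposj x₀ 1) h1α'
    simpa using this
end

section
/- Take X₂ = {0,1} ⊆ ℝ. Let P_i and P_j be joint distributions on X₁ × {0,1} × {0,1} whose Y-marginals are both uniform and which satisfy Σ_y P_i(x₂|y) = Σ_y P_j(x₂|y) for every x₂ ∈ {0,1}. If Cov(X₂,Y;P_i) > Cov(X₂,Y;P_j), then the conditional probabilities satisfy the cross-product inequality P_j(x₂=1|y=1)·P_i(x₂=1|y=0) < P_j(x₂=1|y=0)·P_i(x₂=1|y=1). -/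
open Finset

/-- the cross-product inequality for the conditionals. -/
theorem stmt7 {X₁ : Type*} [Fintype X₁] [Nonempty X₁]
    (Pi' Pj' : X₁ × Fin 2 × Fin 2 → ℝ) (hPi' : IsDist Pi') (hPj' : IsDist Pj')
    (hui : uniformY Pi') (huj : uniformY Pj')
    (hmargx2 : ∀ x₂ : Fin 2,
      ∑ y : Fin 2, condX2Y Pi' x₂ y = ∑ y : Fin 2, condX2Y Pj' x₂ y)
    (hcov : covXY (fun x₂ : Fin 2 => ((x₂ : ℕ) : ℝ)) Pi'
              > covXY (fun x₂ : Fin 2 => ((x₂ : ℕ) : ℝ)) Pj') :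
    condX2Y Pj' 1 1 * condX2Y Pi' 1 0 < condX2Y Pj' 1 0 * condX2Y Pi' 1 1 := by
  have hmx := hmargx2 1
  have hui0 := hui 0
  have hui1 := hui 1
  have huj0 := huj 0
  have huj1 := huj 1
  have hi11 : 0 ≤ ∑ x₁ : X₁, Pi' (x₁, 1, 1) := Finset.sum_nonneg fun x _ => hPi'.1 _
  have hi10 : 0 ≤ ∑ x₁ : X₁, Pi' (x₁, 1, 0) := Finset.sum_nonneg fun x _ => hPi'.1 _
  have hj11 : 0 ≤ ∑ x₁ : X₁, Pj' (x₁, 1, 1) := Finset.sum_nonneg fun x _ => hPj'.1 _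
  have hj10 : 0 ≤ ∑ x₁ : X₁, Pj' (x₁, 1, 0) := Finset.sum_nonneg fun x _ => hPj'.1 _
  simp only [condX2Y, covXY, Fintype.sum_prod_type, Fin.sum_univ_two, Fin.val_zero,
    Fin.val_one, Nat.cast_zero, Nat.cast_one, zero_mul, one_mul, mul_zero, mul_one,
    add_zero, zero_add, Finset.sum_add_distrib] at hmx hcov hui0 hui1 huj0 huj1 ⊢
  rw [hui1, huj1] at hcov
  set ai := ∑ x₁ : X₁, Pi' (x₁, 1, 1)
  set bi := ∑ x₁ : X₁, Pi' (x₁, 1, 0)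
  set aj := ∑ x₁ : X₁, Pj' (x₁, 1, 1)
  set bj := ∑ x₁ : X₁, Pj' (x₁, 1, 0)
  have hb : bi < bj := by linarith
  have hs : 0 < ai + bi := by
    rcases lt_or_ge 0 (ai + bi) with h | h
    · exact h
    · exfalso; linarith
  have haj : aj = ai + bi - bj := by linarith
  rw [haj]
  nlinarith [mul_pos hs (sub_pos.2 hb)]
end

section
/- Take X₂ = {0,1} ⊆ ℝ. Let P_i and P_j be joint distributions on X₁ × {0,1} × {0,1} with P_i(x₁,x₂) > 0 for all (x₁,x₂) and 0 < α_j^i < 1. Assume: the Y-marginals of P_i, P_j and P_j^{i×} are uniform; X₂ is independent of X₁ given Y under both P_i and P_j; Σ_{x₂} P_i(x₁,x₂,y) = Σ_{x₂} P_j(x₁,x₂,y) for all (x₁,y); and the cross-product inequality P_j(x₂=1|y=1)·P_i(x₂=1|y=0) < P_j(x₂=1|y=0)·P_i(x₂=1|y=1) holds. Then Cov(X₂,Y;P_j^{i×}) < 0. -/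
open Finset

/-- the cross-product inequality implies a negative correlation
on the wrong-prediction partition. -/
theorem stmt8 {X₁ : Type*} [Fintype X₁] [Nonempty X₁]
    (Pi' Pj' : X₁ × Fin 2 × Fin 2 → ℝ) (hPi' : IsDist Pi') (hPj' : IsDist Pj')
    (hposi : ∀ x₁ x₂, 0 < margXY Pi' x₁ x₂)
    (hα0 : 0 < alphaP Pi' Pj') (hα1 : alphaP Pi' Pj' < 1)
    (hui : uniformY Pi') (huj : uniformY Pj') (huw : uniformY (partW Pi' Pj'))
    (hcii : condIndep Pi') (hcij : condIndep Pj')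
    (hstable : ∀ (x₁ : X₁) (y : Fin 2),
      ∑ x₂ : Fin 2, Pi' (x₁, x₂, y) = ∑ x₂ : Fin 2, Pj' (x₁, x₂, y))
    (hcross : condX2Y Pj' 1 1 * condX2Y Pi' 1 0 < condX2Y Pj' 1 0 * condX2Y Pi' 1 1) :
    covXY (fun x₂ : Fin 2 => ((x₂ : ℕ) : ℝ)) (partW Pi' Pj') < 0 := by
  classical
  obtain ⟨hi0, hi1⟩ := hPi'
  obtain ⟨hj0, hj1⟩ := hPj'
  have hα : 0 < 1 - alphaP Pi' Pj' := by linarith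
  set m : X₁ → Fin 2 → ℝ := fun x₁ y => ∑ x₂ : Fin 2, Pi' (x₁, x₂, y) with hm
  set ni : Fin 2 → Fin 2 → ℝ := fun x₂ y => ∑ x₁ : X₁, Pi' (x₁, x₂, y) with hni
  set nj : Fin 2 → Fin 2 → ℝ := fun x₂ y => ∑ x₁ : X₁, Pj' (x₁, x₂, y) with hnj
  have hmnn : ∀ x₁ y, 0 ≤ m x₁ y := fun x₁ y => Finset.sum_nonneg fun _ _ => hi0 _
  have hninn : ∀ x₂ y, 0 ≤ ni x₂ y := fun x₂ y => Finset.sum_nonneg fun _ _ => hi0 _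
  have hnjnn : ∀ x₂ y, 0 ≤ nj x₂ y := fun x₂ y => Finset.sum_nonneg fun _ _ => hj0 _
  -- factorizations
  have hfaci : ∀ x₁ x₂ y, Pi' (x₁, x₂, y) = 2 * m x₁ y * ni x₂ y := by
    intro x₁ x₂ y
    have h := hcii x₁ x₂ y
    rw [hui y] at h
    simp only [hm, hni]
    linarith
  have hmj : ∀ x₁ y, (∑ x₂ : Fin 2, Pj' (x₁, x₂, y)) = m x₁ y := by
    intro x₁ y; rw [← hstable]
  have hfacj : ∀ x₁ x₂ y, Pj' (x₁, x₂, y) = 2 * m x₁ y * nj x₂ y := by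
    intro x₁ x₂ y
    have h := hcij x₁ x₂ y
    rw [huj y, hmj x₁ y] at h
    simp only [hnj]
    linarith
  -- pointwise formula for partW
  have hW : ∀ x₁ x₂ y, partW Pi' Pj' (x₁, x₂, y)
      = (2 * m x₁ y * nj x₂ y) * ((2 * m x₁ (1 - y) * ni x₂ (1 - y)) / margXY Pi' x₁ x₂)
        / (1 - alphaP Pi' Pj') := by
    intro x₁ x₂ y
    simp only [partW, condY]
    rw [← hfacj x₁ x₂ y, ← hfaci x₁ x₂ (1 - y)]
  -- partW is nonnegative
  have hWnn : ∀ z, 0 ≤ partW Pi' Pj' z := by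
    rintro ⟨x₁, x₂, y⟩
    rw [hW]
    have hD := hposi x₁ x₂
    apply div_nonneg _ hα.le
    apply mul_nonneg (mul_nonneg (mul_nonneg (by norm_num) (hmnn _ _)) (hnjnn _ _))
    exact div_nonneg (mul_nonneg (mul_nonneg (by norm_num) (hmnn _ _)) (hninn _ _)) hD.le
  -- existence of x₁ with m x₁ 0 * m x₁ 1 > 0
  have hcondnn : ∀ (y : Fin 2) x₁ x₂, 0 ≤ condY Pi' y x₁ x₂ := by
    intro y x₁ x₂
    exact div_nonneg (hi0 _) (hposi x₁ x₂).le
  have hcondsum : ∀ x₁ x₂, condY Pi' 0 x₁ x₂ + condY Pi' 1 x₁ x₂ = 1 := by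
    intro x₁ x₂
    have hD := (hposi x₁ x₂).ne'
    simp only [condY]
    field_simp
    simp [margXY]
  have hj1' : ∑ x₁ : X₁, ∑ x₂ : Fin 2, ∑ y : Fin 2, Pj' (x₁, x₂, y) = 1 := by
    rw [← hj1, Fintype.sum_prod_type]
    refine Finset.sum_congr rfl fun x₁ _ => ?_
    rw [Fintype.sum_prod_type]
  have hS : ∑ x₁ : X₁, ∑ x₂ : Fin 2, ∑ y : Fin 2,
      Pj' (x₁, x₂, y) * condY Pi' (1 - y) x₁ x₂ = 1 - alphaP Pi' Pj' := by
    rw [alphaP, ← hj1']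
    rw [← Finset.sum_sub_distrib]
    refine Finset.sum_congr rfl fun x₁ _ => ?_
    rw [← Finset.sum_sub_distrib]
    refine Finset.sum_congr rfl fun x₂ _ => ?_
    have h1 := hcondsum x₁ x₂
    simp only [Fin.sum_univ_two]
    have e0 : (1 : Fin 2) - 0 = 1 := rfl
    have e1 : (1 : Fin 2) - 1 = 0 := rfl
    rw [e0, e1]
    linear_combination (Pj' (x₁, x₂, 0) + Pj' (x₁, x₂, 1)) * h1
  have hex : ∃ x₁ : X₁, 0 < m x₁ 0 * m x₁ 1 := by
    by_contra hcon
    push_neg at hcon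
    have hzero : ∀ x₁, m x₁ 0 * m x₁ 1 = 0 := fun x₁ =>
      le_antisymm (hcon x₁) (mul_nonneg (hmnn _ _) (hmnn _ _))
    have : (1 : ℝ) - alphaP Pi' Pj' = 0 := by
      rw [← hS]
      refine Finset.sum_eq_zero fun x₁ _ => Finset.sum_eq_zero fun x₂ _ =>
        Finset.sum_eq_zero fun y _ => ?_
      rw [hfacj x₁ x₂ y]
      simp only [condY]
      rw [hfaci x₁ x₂ (1 - y)]
      have hmm : m x₁ y * m x₁ (1 - y) = 0 := by
        fin_cases y
        · simpa using hzero x₁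
        · simpa [mul_comm] using hzero x₁
      have hkey : (2 * m x₁ y * nj x₂ y) * (2 * m x₁ (1 - y) * ni x₂ (1 - y) / margXY Pi' x₁ x₂)
          = (4 * nj x₂ y * ni x₂ (1 - y) / margXY Pi' x₁ x₂) * (m x₁ y * m x₁ (1 - y)) := by
        ring
      rw [hkey, hmm, mul_zero]
    linarith
  obtain ⟨x₀, hx₀⟩ := hex
  -- reduce covariance
  set W := partW Pi' Pj' with hWdef
  have hsplit : ∀ f : X₁ × Fin 2 × Fin 2 → ℝ,
      (∑ z : X₁ × Fin 2 × Fin 2, f z) = ∑ x₁ : X₁, ∑ x₂ : Fin 2, ∑ y : Fin 2, f (x₁, x₂, y) := by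
    intro f
    rw [Fintype.sum_prod_type]
    exact Finset.sum_congr rfl fun x₁ _ => by rw [Fintype.sum_prod_type]
  have hT3 : (∑ z : X₁ × Fin 2 × Fin 2, ((z.2.2 : ℕ) : ℝ) * W z) = 1 / 2 := by
    rw [hsplit]
    have := huw 1
    rw [← this]
    refine Finset.sum_congr rfl fun x₁ _ => ?_
    simp [Fin.sum_univ_two]
  have hT1 : (∑ z : X₁ × Fin 2 × Fin 2, ((z.2.1 : ℕ) : ℝ) * ((z.2.2 : ℕ) : ℝ) * W z)
      = ∑ x₁ : X₁, W (x₁, 1, 1) := by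
    rw [hsplit]
    refine Finset.sum_congr rfl fun x₁ _ => ?_
    simp [Fin.sum_univ_two]
  have hT2 : (∑ z : X₁ × Fin 2 × Fin 2, ((z.2.1 : ℕ) : ℝ) * W z)
      = (∑ x₁ : X₁, W (x₁, 1, 0)) + ∑ x₁ : X₁, W (x₁, 1, 1) := by
    rw [hsplit, ← Finset.sum_add_distrib]
    refine Finset.sum_congr rfl fun x₁ _ => ?_
    simp [Fin.sum_univ_two]
  have hcov : covXY (fun x₂ : Fin 2 => ((x₂ : ℕ) : ℝ)) W
      = ((∑ x₁ : X₁, W (x₁, 1, 1)) - ∑ x₁ : X₁, W (x₁, 1, 0)) / 2 := by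
    simp only [covXY]
    rw [hT1, hT2, hT3]
    ring
  rw [hcov]
  -- the key inequality
  have hC : nj 1 1 * ni 1 0 < nj 1 0 * ni 1 1 := by
    have h := hcross
    simp only [condX2Y, hni, hnj] at h ⊢
    nlinarith [h]
  have hdiff : ∀ x₁ : X₁, W (x₁, 1, 1) - W (x₁, 1, 0)
      = (4 * (m x₁ 0 * m x₁ 1) * (nj 1 1 * ni 1 0 - nj 1 0 * ni 1 1))
        / (margXY Pi' x₁ 1 * (1 - alphaP Pi' Pj')) := by
    intro x₁
    rw [hW x₁ 1 1, hW x₁ 1 0]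
    have e0 : (1 : Fin 2) - 0 = 1 := rfl
    have e1 : (1 : Fin 2) - 1 = 0 := rfl
    rw [e0, e1]
    have hD := (hposi x₁ 1).ne'
    have hA := hα.ne'
    field_simp
    ring
  have hlt : (∑ x₁ : X₁, W (x₁, 1, 1)) - (∑ x₁ : X₁, W (x₁, 1, 0)) < 0 := by
    rw [← Finset.sum_sub_distrib]
    have : ∀ x₁ ∈ Finset.univ, W (x₁, 1, 1) - W (x₁, 1, 0) ≤ (fun _ : X₁ => (0:ℝ)) x₁ := by
      intro x₁ _
      rw [hdiff x₁]
      apply div_nonpos_of_nonpos_of_nonneg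
      · nlinarith [mul_nonneg (hmnn x₁ 0) (hmnn x₁ 1), hC]
      · exact mul_nonneg (hposi x₁ 1).le hα.le
    have hstrict : ∃ x₁ ∈ Finset.univ, W (x₁, 1, 1) - W (x₁, 1, 0) < (fun _ : X₁ => (0:ℝ)) x₁ := by
      refine ⟨x₀, Finset.mem_univ _, ?_⟩
      rw [hdiff x₀]
      apply div_neg_of_neg_of_pos
      · nlinarith [hx₀, hC]
      · exact mul_pos (hposi x₀ 1) hα
    calc (∑ x₁ : X₁, (W (x₁, 1, 1) - W (x₁, 1, 0)))
        < ∑ _x₁ : X₁, (0:ℝ) := Finset.sum_lt_sum this hstrict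
      _ = 0 := by simp
  linarith
end

section
/- (Theorem 2, with normalization constants made precise) Let X₂ be a nonempty finite set of real numbers. Let P_i and P_j be joint distributions on X₁ × X₂ × {0,1} with P_i(x₁,x₂) > 0 and P_j(x₁,x₂) > 0 for all (x₁,x₂), and suppose each of α_j^i, α_i^j, α_i^i, α_j^j lies strictly between 0 and 1. Assume the Y-marginals of P_i, P_j and of the partition distributions P_j^{i×}, P_j^{i✓}, P_i^{i✓}, P_i^{j×}, P_i^{j✓}, P_j^{j✓} are all uniform. If Cov(X₂,Y;P_i) > Cov(X₂,Y;P_j), then Cov(X₂,Y;P_j^{i×}) < (α_i^i/(1−α_j^i))·Cov(X₂,Y;P_i^{i✓}) − (α_j^i/(1−α_j^i))·Cov(X₂,Y;P_j^{i✓}), and Cov(X₂,Y;P_i^{j×}) > (α_j^j/(1−α_i^j))·Cov(X₂,Y;P_j^{j✓}) − (α_i^j/(1−α_i^j))·Cov(X₂,Y;P_i^{j✓}). -/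
open Finset

/-!
On `P_j`, the classifier of `P_i` is either right or wrong, so
`P_j = α_j^i P_j^{i✓} + (1 - α_j^i) P_j^{i×}` pointwise. When both parts have a uniform
`Y`-marginal they have the same mean of `Y`, so the cross term of the covariance of the mixture
vanishes and covariance is affine along this decomposition. For `P_i` classified by itself the
wrong part `P_i^{i×}(x, y) ∝ P_i(x, 0) P_i(x, 1)` does not depend on `y`, so its covariance is
zero and `Cov(P_i) = α_i^i Cov(P_i^{i✓})`. Hence
`(1 - α_j^i) Cov(P_j^{i×}) = Cov(P_j) - α_j^i Cov(P_j^{i✓})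
  < Cov(P_i) - α_j^i Cov(P_j^{i✓}) = α_i^i Cov(P_i^{i✓}) - α_j^i Cov(P_j^{i✓})`,
and with `i` and `j` exchanged the same identity gives the reverse inequality.
-/

section Partition

variable {X₁ X₂ : Type*}

lemma condY_add_condY_one_sub (P : X₁ × X₂ × Fin 2 → ℝ) {x₁ : X₁} {x₂ : X₂}
    (hP : margXY P x₁ x₂ ≠ 0) (y : Fin 2) :
    condY P y x₁ x₂ + condY P (1 - y) x₁ x₂ = 1 := by
  rw [condY, condY, ← add_div, div_eq_one_iff_eq hP, margXY]
  fin_cases y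
  · rfl
  · exact add_comm _ _

variable [Fintype X₁] [Fintype X₂]

lemma sum_eq_sum_sum_zero_add_one (f : X₁ × X₂ × Fin 2 → ℝ) :
    ∑ z, f z = ∑ x₁, ∑ x₂, (f (x₁, x₂, 0) + f (x₁, x₂, 1)) := by
  simp only [Fintype.sum_prod_type, Fin.sum_univ_two]

lemma alphaP_mul_partC_add_partW (Pi' Pj' : X₁ × X₂ × Fin 2 → ℝ)
    (hα₀ : alphaP Pi' Pj' ≠ 0) (hα₁ : alphaP Pi' Pj' ≠ 1) (z : X₁ × X₂ × Fin 2)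
    (hz : margXY Pi' z.1 z.2.1 ≠ 0) :
    alphaP Pi' Pj' * partC Pi' Pj' z + (1 - alphaP Pi' Pj') * partW Pi' Pj' z = Pj' z := by
  have hα₁' : 1 - alphaP Pi' Pj' ≠ 0 := sub_ne_zero.mpr hα₁.symm
  rw [partC, partW, mul_div_cancel₀ _ hα₀, mul_div_cancel₀ _ hα₁', ← mul_add,
    condY_add_condY_one_sub Pi' hz, mul_one]

lemma sum_partC (Pi' Pj' : X₁ × X₂ × Fin 2 → ℝ) (hα : alphaP Pi' Pj' ≠ 0) :
    ∑ z, partC Pi' Pj' z = 1 := by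
  simp only [partC, ← Finset.sum_div]
  rw [div_eq_one_iff_eq hα, alphaP]
  simp only [Fintype.sum_prod_type]

lemma sum_partW (Pi' Pj' : X₁ × X₂ × Fin 2 → ℝ) (hPj' : ∑ z, Pj' z = 1)
    (hpos : ∀ x₁ x₂, margXY Pi' x₁ x₂ ≠ 0)
    (hα₀ : alphaP Pi' Pj' ≠ 0) (hα₁ : alphaP Pi' Pj' ≠ 1) :
    ∑ z, partW Pi' Pj' z = 1 := by
  have hα₁' : 1 - alphaP Pi' Pj' ≠ 0 := sub_ne_zero.mpr hα₁.symm
  have hsplit : ∑ z, Pj' z = alphaP Pi' Pj' + (1 - alphaP Pi' Pj') * ∑ z, partW Pi' Pj' z := by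
    simp only [← alphaP_mul_partC_add_partW Pi' Pj' hα₀ hα₁ _ (hpos _ _),
      Finset.sum_add_distrib, ← Finset.mul_sum, sum_partC Pi' Pj' hα₀, mul_one]
  rw [hPj'] at hsplit
  exact mul_left_cancel₀ hα₁' (by linear_combination -hsplit : _ = (1 - alphaP Pi' Pj') * 1)

lemma partW_self_zero_eq_one (P : X₁ × X₂ × Fin 2 → ℝ) (x₁ : X₁) (x₂ : X₂) :
    partW P P (x₁, x₂, 0) = partW P P (x₁, x₂, 1) := by
  simp only [partW, condY, sub_zero, sub_self]
  ring

end Partition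

section Covariance

variable {X₁ X₂ : Type*} [Fintype X₁] [Fintype X₂] (v : X₂ → ℝ)

lemma sum_label_mul_eq_half {Q : X₁ × X₂ × Fin 2 → ℝ} (hQ : uniformY Q) :
    ∑ z : X₁ × X₂ × Fin 2, ((z.2.2 : ℕ) : ℝ) * Q z = 1 / 2 := by
  simpa [sum_eq_sum_sum_zero_add_one] using hQ 1

lemma covXY_mix {P Q R : X₁ × X₂ × Fin 2 → ℝ} {a : ℝ}
    (hP : ∀ z, a * Q z + (1 - a) * R z = P z) (hQ : uniformY Q) (hR : uniformY R) :
    covXY v P = a * covXY v Q + (1 - a) * covXY v R := by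
  have hsum (f : X₁ × X₂ × Fin 2 → ℝ) :
      ∑ z, f z * P z = a * ∑ z, f z * Q z + (1 - a) * ∑ z, f z * R z := by
    simp only [← hP, Finset.mul_sum, ← Finset.sum_add_distrib]
    exact Finset.sum_congr rfl fun z _ => by ring
  unfold covXY
  rw [hsum fun z => v z.2.1 * ((z.2.2 : ℕ) : ℝ), hsum fun z => v z.2.1,
    hsum fun z => ((z.2.2 : ℕ) : ℝ), sum_label_mul_eq_half hQ, sum_label_mul_eq_half hR]
  ring

lemma covXY_eq_zero_of_label_invariant {W : X₁ × X₂ × Fin 2 → ℝ}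
    (hW : ∀ x₁ x₂, W (x₁, x₂, 0) = W (x₁, x₂, 1)) (hW₁ : ∑ z, W z = 1) :
    covXY v W = 0 := by
  simp only [covXY, sum_eq_sum_sum_zero_add_one, hW] at hW₁ ⊢
  simp only [Fin.val_zero, Fin.val_one, Nat.cast_zero, Nat.cast_one, mul_zero, zero_mul,
    mul_one, one_mul, zero_add, ← two_mul, ← Finset.mul_sum] at hW₁ ⊢
  linear_combination (-∑ x₁, ∑ x₂, v x₂ * W (x₁, x₂, 1)) * hW₁

lemma covXY_eq_alphaP_self_mul (P : X₁ × X₂ × Fin 2 → ℝ) (hP : ∑ z, P z = 1)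
    (hpos : ∀ x₁ x₂, margXY P x₁ x₂ ≠ 0) (hα₀ : alphaP P P ≠ 0) (hα₁ : alphaP P P ≠ 1)
    (huC : uniformY (partC P P)) :
    covXY v P = alphaP P P * covXY v (partC P P) := by
  have hW₁ := sum_partW P P hP hpos hα₀ hα₁
  have huW : uniformY (partW P P) := by
    rw [sum_eq_sum_sum_zero_add_one] at hW₁
    simp only [partW_self_zero_eq_one, ← two_mul, ← Finset.mul_sum] at hW₁
    refine Fin.forall_fin_two.mpr ⟨?_, by linarith⟩
    simp only [partW_self_zero_eq_one]
    linarith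
  rw [covXY_mix v (alphaP_mul_partC_add_partW P P hα₀ hα₁ · (hpos _ _)) huC huW,
    covXY_eq_zero_of_label_invariant v (partW_self_zero_eq_one P) hW₁, mul_zero, add_zero]

lemma one_sub_alphaP_mul_covXY_partW (Pi' Pj' : X₁ × X₂ × Fin 2 → ℝ)
    (hpos : ∀ x₁ x₂, margXY Pi' x₁ x₂ ≠ 0) (hα₀ : alphaP Pi' Pj' ≠ 0) (hα₁ : alphaP Pi' Pj' ≠ 1)
    (huW : uniformY (partW Pi' Pj')) (huC : uniformY (partC Pi' Pj')) :
    (1 - alphaP Pi' Pj') * covXY v (partW Pi' Pj')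
      = covXY v Pj' - alphaP Pi' Pj' * covXY v (partC Pi' Pj') := by
  rw [covXY_mix v (alphaP_mul_partC_add_partW Pi' Pj' hα₀ hα₁ · (hpos _ _)) huC huW]
  ring

lemma covXY_partW_sub_eq (Pi' Pj' : X₁ × X₂ × Fin 2 → ℝ) (hPi' : ∑ z, Pi' z = 1)
    (hposi : ∀ x₁ x₂, margXY Pi' x₁ x₂ ≠ 0)
    (hα₀ : alphaP Pi' Pj' ≠ 0) (hα₁ : alphaP Pi' Pj' ≠ 1)
    (hαi₀ : alphaP Pi' Pi' ≠ 0) (hαi₁ : alphaP Pi' Pi' ≠ 1)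
    (huW : uniformY (partW Pi' Pj')) (huC : uniformY (partC Pi' Pj'))
    (huCi : uniformY (partC Pi' Pi')) :
    covXY v (partW Pi' Pj')
        - ((alphaP Pi' Pi' / (1 - alphaP Pi' Pj')) * covXY v (partC Pi' Pi')
          - (alphaP Pi' Pj' / (1 - alphaP Pi' Pj')) * covXY v (partC Pi' Pj'))
      = (covXY v Pj' - covXY v Pi') / (1 - alphaP Pi' Pj') := by
  have hα₁' : 1 - alphaP Pi' Pj' ≠ 0 := sub_ne_zero.mpr hα₁.symm
  have hW := one_sub_alphaP_mul_covXY_partW v Pi' Pj' hposi hα₀ hα₁ huW huC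
  have hi := covXY_eq_alphaP_self_mul v Pi' hPi' hposi hαi₀ hαi₁ huCi
  field_simp
  linear_combination hW + hi

end Covariance

theorem stmt9_general {X₁ : Type*} [Fintype X₁] (S : Finset ℝ)
    (Pi' Pj' : X₁ × ↥S × Fin 2 → ℝ) (hPi' : IsDist Pi') (hPj' : IsDist Pj')
    (hposi : ∀ x₁ x₂, 0 < margXY Pi' x₁ x₂) (hposj : ∀ x₁ x₂, 0 < margXY Pj' x₁ x₂)
    (hαji0 : 0 < alphaP Pi' Pj') (hαji1 : alphaP Pi' Pj' < 1)
    (hαij0 : 0 < alphaP Pj' Pi') (hαij1 : alphaP Pj' Pi' < 1)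
    (hαii0 : 0 < alphaP Pi' Pi') (hαii1 : alphaP Pi' Pi' < 1)
    (hαjj0 : 0 < alphaP Pj' Pj') (hαjj1 : alphaP Pj' Pj' < 1)
    (hu1 : uniformY (partW Pi' Pj')) (hu2 : uniformY (partC Pi' Pj'))
    (hu3 : uniformY (partC Pi' Pi')) (hu4 : uniformY (partW Pj' Pi'))
    (hu5 : uniformY (partC Pj' Pi')) (hu6 : uniformY (partC Pj' Pj'))
    (hcov : covXY (fun x : ↥S => (x : ℝ)) Pi' > covXY (fun x : ↥S => (x : ℝ)) Pj') :
    covXY (fun x : ↥S => (x : ℝ)) (partW Pi' Pj')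
      < (alphaP Pi' Pi' / (1 - alphaP Pi' Pj')) * covXY (fun x : ↥S => (x : ℝ)) (partC Pi' Pi')
        - (alphaP Pi' Pj' / (1 - alphaP Pi' Pj')) * covXY (fun x : ↥S => (x : ℝ)) (partC Pi' Pj') ∧
    covXY (fun x : ↥S => (x : ℝ)) (partW Pj' Pi')
      > (alphaP Pj' Pj' / (1 - alphaP Pj' Pi')) * covXY (fun x : ↥S => (x : ℝ)) (partC Pj' Pj')
        - (alphaP Pj' Pi' / (1 - alphaP Pj' Pi')) * covXY (fun x : ↥S => (x : ℝ)) (partC Pj' Pi') := by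
  have hposi' x₁ x₂ := (hposi x₁ x₂).ne'
  have hposj' x₁ x₂ := (hposj x₁ x₂).ne'
  have hji := covXY_partW_sub_eq Subtype.val Pi' Pj' hPi'.2 hposi' hαji0.ne' hαji1.ne
    hαii0.ne' hαii1.ne hu1 hu2 hu3
  have hij := covXY_partW_sub_eq Subtype.val Pj' Pi' hPj'.2 hposj' hαij0.ne' hαij1.ne
    hαjj0.ne' hαjj1.ne hu4 hu5 hu6
  constructor
  · exact sub_neg.mp (hji ▸ div_neg_of_neg_of_pos (sub_neg.mpr hcov) (sub_pos.mpr hαji1))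
  · exact sub_pos.mp (hij ▸ div_pos (sub_pos.mpr hcov) (sub_pos.mpr hαij1))

/-- Theorem 2, with normalization constants made precise. -/
theorem stmt9 {X₁ : Type*} [Fintype X₁] [Nonempty X₁] (S : Finset ℝ) (hS : S.Nonempty)
    (Pi' Pj' : X₁ × ↥S × Fin 2 → ℝ) (hPi' : IsDist Pi') (hPj' : IsDist Pj')
    (hposi : ∀ x₁ x₂, 0 < margXY Pi' x₁ x₂) (hposj : ∀ x₁ x₂, 0 < margXY Pj' x₁ x₂)
    (hαji0 : 0 < alphaP Pi' Pj') (hαji1 : alphaP Pi' Pj' < 1)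
    (hαij0 : 0 < alphaP Pj' Pi') (hαij1 : alphaP Pj' Pi' < 1)
    (hαii0 : 0 < alphaP Pi' Pi') (hαii1 : alphaP Pi' Pi' < 1)
    (hαjj0 : 0 < alphaP Pj' Pj') (hαjj1 : alphaP Pj' Pj' < 1)
    (hui : uniformY Pi') (huj : uniformY Pj')
    (hu1 : uniformY (partW Pi' Pj')) (hu2 : uniformY (partC Pi' Pj'))
    (hu3 : uniformY (partC Pi' Pi')) (hu4 : uniformY (partW Pj' Pi'))
    (hu5 : uniformY (partC Pj' Pi')) (hu6 : uniformY (partC Pj' Pj'))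
    (hcov : covXY (fun x : ↥S => (x : ℝ)) Pi' > covXY (fun x : ↥S => (x : ℝ)) Pj') :
    covXY (fun x : ↥S => (x : ℝ)) (partW Pi' Pj')
      < (alphaP Pi' Pi' / (1 - alphaP Pi' Pj')) * covXY (fun x : ↥S => (x : ℝ)) (partC Pi' Pi')
        - (alphaP Pi' Pj' / (1 - alphaP Pi' Pj')) * covXY (fun x : ↥S => (x : ℝ)) (partC Pi' Pj') ∧
    covXY (fun x : ↥S => (x : ℝ)) (partW Pj' Pi')
      > (alphaP Pj' Pj' / (1 - alphaP Pj' Pi')) * covXY (fun x : ↥S => (x : ℝ)) (partC Pj' Pj')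
        - (alphaP Pj' Pi' / (1 - alphaP Pj' Pi')) * covXY (fun x : ↥S => (x : ℝ)) (partC Pj' Pi') :=
  stmt9_general S Pi' Pj' hPi' hPj' hposi hposj hαji0 hαji1 hαij0 hαij1 hαii0 hαii1 hαjj0 hαjj1 hu1
    hu2 hu3 hu4 hu5 hu6 hcov
end

section
/- Let X₂ be a nonempty finite set of real numbers, and let P_i, P_j be joint distributions on X₁ × X₂ × {0,1} with P_i(x₁,x₂) > 0 for all (x₁,x₂) and 0 < α_j^i < 1. If the Y-marginal of P_j^{i×} is uniform, then Cov(X₂,Y;P_j^{i×}) = (1/(2(1−α_j^i)))·Σ_{x₁,x₂} x₂·(P_j(x₁,x₂,1)·P_i(0|x₁,x₂) − P_j(x₁,x₂,0)·P_i(1|x₁,x₂)). If the Y-marginal of P_j^{i✓} is uniform, then Cov(X₂,Y;P_j^{i✓}) = (1/(2·α_j^i))·Σ_{x₁,x₂} x₂·(P_j(x₁,x₂,1)·P_i(1|x₁,x₂) − P_j(x₁,x₂,0)·P_i(0|x₁,x₂)). -/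
open Finset

lemma covUniform {X₁ X₂ : Type*} [Fintype X₁] [Fintype X₂] (v : X₂ → ℝ)
    (Q : X₁ × X₂ × Fin 2 → ℝ) (h : ∀ y : Fin 2, ∑ x₁ : X₁, ∑ x₂ : X₂, Q (x₁, x₂, y) = 1 / 2) :
    ((∑ z : X₁ × X₂ × Fin 2, v z.2.1 * ((z.2.2 : ℕ) : ℝ) * Q z)
    - (∑ z : X₁ × X₂ × Fin 2, v z.2.1 * Q z)
      * (∑ z : X₁ × X₂ × Fin 2, ((z.2.2 : ℕ) : ℝ) * Q z))
      = (1/2) * ∑ x₁ : X₁, ∑ x₂ : X₂, v x₂ * (Q (x₁, x₂, 1) - Q (x₁, x₂, 0)) := by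
  have h1 := h 1
  simp only [Fintype.sum_prod_type, Fin.sum_univ_two, Fin.val_zero, Fin.val_one,
    Nat.cast_zero, Nat.cast_one, mul_zero, zero_mul, mul_one, one_mul, zero_add]
  rw [h1]
  simp only [mul_sub, Finset.sum_sub_distrib, Finset.sum_add_distrib, ← Finset.mul_sum]
  ring

/-- explicit covariance formulas for the partition distributions
under uniform Y-marginals. -/
theorem stmt10 {X₁ : Type*} [Fintype X₁] [Nonempty X₁] (S : Finset ℝ) (hS : S.Nonempty)
    (Pi' Pj' : X₁ × ↥S × Fin 2 → ℝ) (hPi' : IsDist Pi') (hPj' : IsDist Pj')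
    (hpos : ∀ x₁ x₂, 0 < margXY Pi' x₁ x₂)
    (hα0 : 0 < alphaP Pi' Pj') (hα1 : alphaP Pi' Pj' < 1) :
    (uniformY (partW Pi' Pj') →
      covXY (fun x : ↥S => (x : ℝ)) (partW Pi' Pj')
        = (1 / (2 * (1 - alphaP Pi' Pj')))
            * ∑ x₁ : X₁, ∑ x₂ : ↥S, (x₂ : ℝ)
              * (Pj' (x₁, x₂, 1) * condY Pi' 0 x₁ x₂ - Pj' (x₁, x₂, 0) * condY Pi' 1 x₁ x₂)) ∧
    (uniformY (partC Pi' Pj') →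
      covXY (fun x : ↥S => (x : ℝ)) (partC Pi' Pj')
        = (1 / (2 * alphaP Pi' Pj'))
            * ∑ x₁ : X₁, ∑ x₂ : ↥S, (x₂ : ℝ)
              * (Pj' (x₁, x₂, 1) * condY Pi' 1 x₁ x₂ - Pj' (x₁, x₂, 0) * condY Pi' 0 x₁ x₂)) := by
  
  constructor
  · intro hu
    have key := covUniform (fun x : ↥S => (x : ℝ)) (partW Pi' Pj') hu
    unfold covXY
    rw [key, Finset.mul_sum, Finset.mul_sum]
    refine Finset.sum_congr rfl fun x₁ _ => ?_
    rw [Finset.mul_sum, Finset.mul_sum]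
    refine Finset.sum_congr rfl fun x₂ _ => ?_
    simp only [partW]
    rw [show (1 - 1 : Fin 2) = 0 from rfl, show (1 - 0 : Fin 2) = 1 from rfl]
    have hne : (1 : ℝ) - alphaP Pi' Pj' ≠ 0 := by linarith
    field_simp
  · intro hu
    have key := covUniform (fun x : ↥S => (x : ℝ)) (partC Pi' Pj') hu
    unfold covXY
    rw [key, Finset.mul_sum, Finset.mul_sum]
    refine Finset.sum_congr rfl fun x₁ _ => ?_
    rw [Finset.mul_sum, Finset.mul_sum]
    refine Finset.sum_congr rfl fun x₂ _ => ?_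
    simp only [partC]
    have hne : alphaP Pi' Pj' ≠ 0 := ne_of_gt hα0
    field_simp
end

section
/- Let Q✓ and Q× be joint distributions on {0,1} × {0,1} × {0,1} such that Q✓(x₁,x₂,y) = 0 whenever x₂ ≠ y, Q×(x₁,x₂,y) = 0 whenever x₂ = y, and Q✓(x₁,y,y) = Q×(x₁,1−y,y) for all x₁, y (mirrored groups with deterministic labels). For a strictly positive conditional classifier g : {0,1} × {0,1} × {0,1} → ℝ with g(x₁,x₂,0) + g(x₁,x₂,1) = 1 and g > 0, write g(y|x₁,x₂) := g(x₁,x₂,y) and define the risk R_Q(g) := Σ_{x₁,x₂,y} Q(x₁,x₂,y)·(−log g(y|x₁,x₂)). Then the symmetrized classifier ḡ defined by ḡ(y|x₁,x₂) := (g(y|x₁,0) + g(y|x₁,1))/2, which does not depend on x₂, satisfies max(R_{Q✓}(ḡ), R_{Q×}(ḡ)) ≤ max(R_{Q✓}(g), R_{Q×}(g)). Consequently, the infimum of the worst-group risk max(R_{Q✓}(g), R_{Q×}(g)) over all strictly positive conditional classifiers g equals the infimum over classifiers g that depend only on x₁ (i.e. satisfy g(y|x₁,0) = g(y|x₁,1)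 for all x₁, y). -/
open Finset

/-- The log-loss risk of a conditional classifier `g(y|x₁,x₂) = g (x₁,x₂,y)` under `Q`. -/
noncomputable def riskQ (Q g : Fin 2 × Fin 2 × Fin 2 → ℝ) : ℝ :=
  ∑ z : Fin 2 × Fin 2 × Fin 2, Q z * (-Real.log (g z))

lemma amgm_log (a b : ℝ) (ha : 0 < a) (hb : 0 < b) :
    -Real.log ((a + b) / 2) ≤ (-Real.log a + -Real.log b) / 2 := by
  have h1 : a * b ≤ ((a + b) / 2) ^ 2 := by nlinarith [sq_nonneg (a - b)]
  have h2 : Real.log (a * b) ≤ Real.log (((a + b) / 2) ^ 2) :=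
    Real.log_le_log (by positivity) h1
  rw [Real.log_mul ha.ne' hb.ne', Real.log_pow] at h2
  push_cast at h2
  linarith

lemma riskQ_expand (Q g : Fin 2 × Fin 2 × Fin 2 → ℝ) :
    riskQ Q g = Q (0,0,0) * (-Real.log (g (0,0,0))) + Q (0,0,1) * (-Real.log (g (0,0,1)))
      + Q (0,1,0) * (-Real.log (g (0,1,0))) + Q (0,1,1) * (-Real.log (g (0,1,1)))
      + Q (1,0,0) * (-Real.log (g (1,0,0))) + Q (1,0,1) * (-Real.log (g (1,0,1)))
      + Q (1,1,0) * (-Real.log (g (1,1,0))) + Q (1,1,1) * (-Real.log (g (1,1,1))) := by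
  simp [riskQ, Fintype.sum_prod_type, Fin.sum_univ_two]
  ring

lemma risk_nonneg (Q g : Fin 2 × Fin 2 × Fin 2 → ℝ) (hQ : IsDist Q)
    (hg : ∀ z, 0 < g z) (hs : ∀ x₁ x₂ : Fin 2, g (x₁, x₂, 0) + g (x₁, x₂, 1) = 1) :
    0 ≤ riskQ Q g := by
  apply Finset.sum_nonneg
  rintro ⟨x₁, x₂, y⟩ -
  apply mul_nonneg (hQ.1 _)
  rw [neg_nonneg]
  apply Real.log_nonpos (hg _).le
  have h0 := hg (x₁, x₂, 0)
  have h1 := hg (x₁, x₂, 1)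
  have h2 := hs x₁ x₂
  fin_cases y
  · show g (x₁, x₂, 0) ≤ 1; linarith
  · show g (x₁, x₂, 1) ≤ 1; linarith


/-- symmetrizing over x₂ never increases the worst-group risk on
mirrored deterministic groups, hence the worst-group infimum is attained over
classifiers depending only on x₁. -/
theorem stmt15 (Qc Qx : Fin 2 × Fin 2 × Fin 2 → ℝ)
    (hQcD : IsDist Qc) (hQxD : IsDist Qx)
    (hQc0 : ∀ x₁ x₂ y : Fin 2, x₂ ≠ y → Qc (x₁, x₂, y) = 0)
    (hQx0 : ∀ x₁ x₂ y : Fin 2, x₂ = y → Qx (x₁, x₂, y) = 0)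
    (hmirror : ∀ x₁ y : Fin 2, Qc (x₁, y, y) = Qx (x₁, 1 - y, y)) :
    (∀ g : Fin 2 × Fin 2 × Fin 2 → ℝ, (∀ z, 0 < g z) →
      (∀ x₁ x₂ : Fin 2, g (x₁, x₂, 0) + g (x₁, x₂, 1) = 1) →
      max (riskQ Qc (fun z => (g (z.1, 0, z.2.2) + g (z.1, 1, z.2.2)) / 2))
          (riskQ Qx (fun z => (g (z.1, 0, z.2.2) + g (z.1, 1, z.2.2)) / 2))
        ≤ max (riskQ Qc g) (riskQ Qx g)) ∧
    sInf {r : ℝ | ∃ g : Fin 2 × Fin 2 × Fin 2 → ℝ, (∀ z, 0 < g z) ∧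
          (∀ x₁ x₂ : Fin 2, g (x₁, x₂, 0) + g (x₁, x₂, 1) = 1) ∧
          r = max (riskQ Qc g) (riskQ Qx g)}
      = sInf {r : ℝ | ∃ g : Fin 2 × Fin 2 × Fin 2 → ℝ, (∀ z, 0 < g z) ∧
          (∀ x₁ x₂ : Fin 2, g (x₁, x₂, 0) + g (x₁, x₂, 1) = 1) ∧
          (∀ x₁ y : Fin 2, g (x₁, 0, y) = g (x₁, 1, y)) ∧
          r = max (riskQ Qc g) (riskQ Qx g)} := by
  have part1 : ∀ g : Fin 2 × Fin 2 × Fin 2 → ℝ, (∀ z, 0 < g z) →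
      (∀ x₁ x₂ : Fin 2, g (x₁, x₂, 0) + g (x₁, x₂, 1) = 1) →
      max (riskQ Qc (fun z => (g (z.1, 0, z.2.2) + g (z.1, 1, z.2.2)) / 2))
          (riskQ Qx (fun z => (g (z.1, 0, z.2.2) + g (z.1, 1, z.2.2)) / 2))
        ≤ max (riskQ Qc g) (riskQ Qx g) := by
    intro g hg hsum
    have c1 : Qc (0,0,1) = 0 := hQc0 0 0 1 (by decide)
    have c2 : Qc (0,1,0) = 0 := hQc0 0 1 0 (by decide)
    have c3 : Qc (1,0,1) = 0 := hQc0 1 0 1 (by decide)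
    have c4 : Qc (1,1,0) = 0 := hQc0 1 1 0 (by decide)
    have x1 : Qx (0,0,0) = 0 := hQx0 0 0 0 rfl
    have x2 : Qx (0,1,1) = 0 := hQx0 0 1 1 rfl
    have x3 : Qx (1,0,0) = 0 := hQx0 1 0 0 rfl
    have x4 : Qx (1,1,1) = 0 := hQx0 1 1 1 rfl
    have m1 : Qc (0,0,0) = Qx (0,1,0) := by simpa using hmirror 0 0
    have m2 : Qc (0,1,1) = Qx (0,0,1) := by simpa using hmirror 0 1
    have m3 : Qc (1,0,0) = Qx (1,1,0) := by simpa using hmirror 1 0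
    have m4 : Qc (1,1,1) = Qx (1,0,1) := by simpa using hmirror 1 1
    have k1 := mul_le_mul_of_nonneg_left
      (amgm_log (g (0,0,0)) (g (0,1,0)) (hg _) (hg _)) (hQxD.1 (0,1,0))
    have k2 := mul_le_mul_of_nonneg_left
      (amgm_log (g (0,0,1)) (g (0,1,1)) (hg _) (hg _)) (hQxD.1 (0,0,1))
    have k3 := mul_le_mul_of_nonneg_left
      (amgm_log (g (1,0,0)) (g (1,1,0)) (hg _) (hg _)) (hQxD.1 (1,1,0))
    have k4 := mul_le_mul_of_nonneg_left
      (amgm_log (g (1,0,1)) (g (1,1,1)) (hg _) (hg _)) (hQxD.1 (1,0,1))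
    have hCD : (riskQ Qc g + riskQ Qx g)/2 ≤ max (riskQ Qc g) (riskQ Qx g) := by
      have := le_max_left (riskQ Qc g) (riskQ Qx g)
      have := le_max_right (riskQ Qc g) (riskQ Qx g)
      linarith
    apply max_le <;> refine le_trans ?_ hCD <;>
      simp only [riskQ_expand, c1, c2, c3, c4, x1, x2, x3, x4, m1, m2, m3, m4,
        zero_mul, add_zero, zero_add] <;>
      nlinarith [k1, k2, k3, k4]
  refine ⟨part1, ?_⟩
  have hbdd1 : BddBelow {r : ℝ | ∃ g : Fin 2 × Fin 2 × Fin 2 → ℝ, (∀ z, 0 < g z) ∧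
      (∀ x₁ x₂ : Fin 2, g (x₁, x₂, 0) + g (x₁, x₂, 1) = 1) ∧
      r = max (riskQ Qc g) (riskQ Qx g)} := by
    refine ⟨0, ?_⟩
    rintro r ⟨g, hg, hs, rfl⟩
    exact le_max_of_le_left (risk_nonneg Qc g hQcD hg hs)
  have hbdd2 : BddBelow {r : ℝ | ∃ g : Fin 2 × Fin 2 × Fin 2 → ℝ, (∀ z, 0 < g z) ∧
      (∀ x₁ x₂ : Fin 2, g (x₁, x₂, 0) + g (x₁, x₂, 1) = 1) ∧
      (∀ x₁ y : Fin 2, g (x₁, 0, y) = g (x₁, 1, y)) ∧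
      r = max (riskQ Qc g) (riskQ Qx g)} := by
    refine ⟨0, ?_⟩
    rintro r ⟨g, hg, hs, _, rfl⟩
    exact le_max_of_le_left (risk_nonneg Qc g hQcD hg hs)
  have half : ∀ _z : Fin 2 × Fin 2 × Fin 2, (0:ℝ) < 1/2 := fun _ => by norm_num
  have hne1 : {r : ℝ | ∃ g : Fin 2 × Fin 2 × Fin 2 → ℝ, (∀ z, 0 < g z) ∧
      (∀ x₁ x₂ : Fin 2, g (x₁, x₂, 0) + g (x₁, x₂, 1) = 1) ∧
      r = max (riskQ Qc g) (riskQ Qx g)}.Nonempty :=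
    ⟨_, fun _ => (1:ℝ)/2, half, fun _ _ => by norm_num, rfl⟩
  have hne2 : {r : ℝ | ∃ g : Fin 2 × Fin 2 × Fin 2 → ℝ, (∀ z, 0 < g z) ∧
      (∀ x₁ x₂ : Fin 2, g (x₁, x₂, 0) + g (x₁, x₂, 1) = 1) ∧
      (∀ x₁ y : Fin 2, g (x₁, 0, y) = g (x₁, 1, y)) ∧
      r = max (riskQ Qc g) (riskQ Qx g)}.Nonempty :=
    ⟨_, fun _ => (1:ℝ)/2, half, fun _ _ => by norm_num, fun _ _ => rfl, rfl⟩
  apply le_antisymm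
  · exact csInf_le_csInf hbdd1 hne2 (by rintro r ⟨g, hg, hs, _, hr⟩; exact ⟨g, hg, hs, hr⟩)
  · refine le_csInf hne1 ?_
    rintro r ⟨g, hg, hs, rfl⟩
    refine le_trans (csInf_le hbdd2 ?_) (part1 g hg hs)
    refine ⟨fun z => (g (z.1, 0, z.2.2) + g (z.1, 1, z.2.2)) / 2, ?_, ?_, ?_, rfl⟩
    · intro z; have := hg (z.1, 0, z.2.2); have := hg (z.1, 1, z.2.2); positivity
    · intro x₁ x₂
      have := hs x₁ 0; have := hs x₁ 1
      simp only []
      linarith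
    · intro x₁ y; rfl
end
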